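/- arXiv:2503.14981 — 2 statements merged into one kernel-verified Lean document; each statement's English description precedes it below -/
import Mathlib

section
/- (Subdifferential of a spectral function, membership characterization.) Let 𝔥 be a Euclidean space with spectral decomposition system (𝒳, S, γ, (Λ_a)_{a∈A}), let φ : 𝒳 → (−∞, +∞] be proper (not identically +∞) and S-invariant (φ(s • x) = φ(x) for all s ∈ S, x ∈ 𝒳), and let X, Y ∈ 𝔥. Then Y ∈ ∂(φ ∘ γ)(X) if and only if γ(Y) ∈ ∂φ(γ(X)) and there exists a ∈ A with X = Λ_a(γ(X)) and Y = Λ_a(γ(Y)). Here, for a proper function f : 𝓗 → (−∞, +∞] on a Euclidean space 𝓗, the convex subdifferential is ∂f(x) = { y ∈ 𝓗 : for all z ∈ 𝓗, ⟨z − x, y⟩ + f(x) ≤ f(z) }. -/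
open scoped InnerProductSpace

/-- A spectral decomposition system `(𝓧, S, γ, (Λ a)_{a ∈ A})` for a Euclidean space `𝓗`,
with spectral-induced ordering mapping `τ`. -/
structure SpectralDecompositionSystem
    (𝓗 : Type*) (𝓧 : Type*) [NormedAddCommGroup 𝓗] [InnerProductSpace ℝ 𝓗]
    [NormedAddCommGroup 𝓧] [InnerProductSpace ℝ 𝓧]
    (S : Type*) [Group S] [MulAction S 𝓧]
    {A : Type*} (γ : 𝓗 → 𝓧) (Λ : A → 𝓧 →ₗ[ℝ] 𝓗) (τ : 𝓧 → 𝓧) : Prop where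
  /-- `S` acts on `𝓧` by linear maps. -/
  smul_add_smul : ∀ (s : S) (c : ℝ) (x y : 𝓧), s • (c • x + y) = c • (s • x) + s • y
  /-- `S` acts on `𝓧` by isometries. -/
  norm_smul : ∀ (s : S) (x : 𝓧), ‖s • x‖ = ‖x‖
  /-- Each `Λ a` is a (linear) isometry. -/
  norm_lambda : ∀ (a : A) (x : 𝓧), ‖Λ a x‖ = ‖x‖
  /-- `τ` is `S`-invariant. -/
  tau_smul : ∀ (s : S) (x : 𝓧), τ (s • x) = τ x
  /-- `τ x` belongs to the orbit `S • x`. -/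
  tau_orbit : ∀ x : 𝓧, ∃ s : S, τ x = s • x
  /-- `γ ∘ Λ a = τ` for all `a ∈ A`. -/
  gamma_lambda : ∀ (a : A) (x : 𝓧), γ (Λ a x) = τ x
  /-- Every element of `𝓗` admits a spectral decomposition. -/
  exists_decomp : ∀ Z : 𝓗, ∃ a : A, Z = Λ a (γ Z)
  /-- Von Neumann-type trace inequality. -/
  inner_le : ∀ Z W : 𝓗, ⟪Z, W⟫_ℝ ≤ ⟪γ Z, γ W⟫_ℝ

variable {𝓗 𝓧 : Type*} [NormedAddCommGroup 𝓗] [InnerProductSpace ℝ 𝓗]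
  [FiniteDimensional ℝ 𝓗] [NormedAddCommGroup 𝓧] [InnerProductSpace ℝ 𝓧]
  [FiniteDimensional ℝ 𝓧] {S : Type*} [Group S] [MulAction S 𝓧]
  {A : Type*} [Nonempty A]

/-- The convex subdifferential of an extended-real-valued function on a Euclidean space. -/
def subdifferential {V : Type*} [NormedAddCommGroup V] [InnerProductSpace ℝ V]
    (f : V → EReal) (x : V) : Set V :=
  {y | ∀ z : V, ((⟪z - x, y⟫_ℝ : ℝ) : EReal) + f x ≤ f z}

/-!
If `Y` is a subgradient of `φ ∘ γ` at `Z`, testing the subgradient inequality at a point with the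
same spectrum `γ Z` as `Z` but decomposed along a frame `Λ a` of `Y` gives `⟪γ Z, γ Y⟫ ≤ ⟪Z, Y⟫`,
so equality holds in the trace inequality. Equality forces `γ (Z + Y) = γ Z + γ Y`, and a spectral
decomposition of `Z + Y` is then a simultaneous one of `Z` and `Y`; along that common frame the
subgradient inequality transfers verbatim to `φ` at `γ Z`. Conversely, a simultaneous decomposition
gives `⟪Z, Y⟫ = ⟪γ Z, γ Y⟫`, and the trace inequality turns `γ Y ∈ ∂φ (γ Z)` into
`Y ∈ ∂(φ ∘ γ) Z`.
-/

section InnerProductSpace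

variable {E : Type*} [NormedAddCommGroup E] [InnerProductSpace ℝ E]

theorem eq_of_norm_eq_of_norm_sq_le_inner {u v : E} (hn : ‖u‖ = ‖v‖)
    (h : ‖u‖ ^ 2 ≤ ⟪u, v⟫_ℝ) : u = v := by
  have : ‖u - v‖ ^ 2 ≤ 0 := by rw [norm_sub_sq_real, ← hn]; linarith
  rw [← sub_eq_zero, ← norm_eq_zero]
  nlinarith [norm_nonneg (u - v)]

variable {f : E → EReal} {x y z : E}

theorem ne_top_of_mem_subdifferential (hy : y ∈ subdifferential f x) (hz : f z ≠ ⊤) :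
    f x ≠ ⊤ := by
  intro hx
  have := hy z
  rw [hx, EReal.add_top_of_ne_bot (EReal.coe_ne_bot _), top_le_iff] at this
  exact hz this

theorem inner_sub_nonpos_of_mem_subdifferential (hy : y ∈ subdifferential f x)
    (hx_top : f x ≠ ⊤) (hx_bot : f x ≠ ⊥) (hz : f z ≤ f x) : ⟪z - x, y⟫_ℝ ≤ 0 := by
  have := (hy z).trans hz
  rw [← EReal.coe_toReal hx_top hx_bot, ← EReal.coe_add, EReal.coe_le_coe_iff] at this
  linarith

end InnerProductSpace

namespace SpectralDecompositionSystem

variable {𝓗 𝓧 : Type*} [NormedAddCommGroup 𝓗] [InnerProductSpace ℝ 𝓗]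
  [NormedAddCommGroup 𝓧] [InnerProductSpace ℝ 𝓧] {S : Type*} [Group S] [MulAction S 𝓧]
  {A : Type*} {γ : 𝓗 → 𝓧} {Λ : A → 𝓧 →ₗ[ℝ] 𝓗} {τ : 𝓧 → 𝓧}
  (hsys : SpectralDecompositionSystem 𝓗 𝓧 S γ Λ τ)
include hsys

theorem inner_lambda (a : A) (x y : 𝓧) : ⟪Λ a x, Λ a y⟫_ℝ = ⟪x, y⟫_ℝ :=
  LinearIsometry.inner_map_map ⟨Λ a, hsys.norm_lambda a⟩ x y

theorem norm_gamma (Z : 𝓗) : ‖γ Z‖ = ‖Z‖ := by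
  obtain ⟨a, ha⟩ := hsys.exists_decomp Z
  conv_rhs => rw [ha, hsys.norm_lambda]

theorem tau_gamma (Z : 𝓗) : τ (γ Z) = γ Z := by
  obtain ⟨a, ha⟩ := hsys.exists_decomp Z
  conv_rhs => rw [ha, hsys.gamma_lambda]

theorem gamma_lambda_gamma (a : A) (Z : 𝓗) : γ (Λ a (γ Z)) = γ Z := by
  rw [hsys.gamma_lambda, hsys.tau_gamma]

theorem apply_gamma_lambda {φ : 𝓧 → EReal} (hφ : ∀ (s : S) (x : 𝓧), φ (s • x) = φ x)
    (a : A) (x : 𝓧) : φ (γ (Λ a x)) = φ x := by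
  obtain ⟨s, hs⟩ := hsys.tau_orbit x
  rw [hsys.gamma_lambda, hs, hφ]

theorem inner_lambda_of_decomp {a : A} {Y : 𝓗} (hY : Y = Λ a (γ Y)) (x : 𝓧) :
    ⟪Λ a x, Y⟫_ℝ = ⟪x, γ Y⟫_ℝ := by
  conv_lhs => rw [hY]
  exact hsys.inner_lambda a x (γ Y)

theorem inner_eq_inner_gamma_of_decomp {a : A} {Z Y : 𝓗} (hZ : Z = Λ a (γ Z))
    (hY : Y = Λ a (γ Y)) : ⟪Z, Y⟫_ℝ = ⟪γ Z, γ Y⟫_ℝ := by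
  conv_lhs => rw [hZ]
  exact hsys.inner_lambda_of_decomp hY (γ Z)

theorem gamma_add_of_inner_eq {Z Y : 𝓗} (h : ⟪Z, Y⟫_ℝ = ⟪γ Z, γ Y⟫_ℝ) :
    γ (Z + Y) = γ Z + γ Y := by
  refine eq_of_norm_eq_of_norm_sq_le_inner ?_ ?_
  · rw [← sq_eq_sq₀ (norm_nonneg _) (norm_nonneg _), norm_add_sq_real, hsys.norm_gamma,
      norm_add_sq_real, hsys.norm_gamma, hsys.norm_gamma, h]
  · calc ‖γ (Z + Y)‖ ^ 2 = ⟪Z + Y, Z⟫_ℝ + ⟪Z + Y, Y⟫_ℝ := by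
          rw [hsys.norm_gamma, ← inner_add_right, real_inner_self_eq_norm_sq]
      _ ≤ ⟪γ (Z + Y), γ Z⟫_ℝ + ⟪γ (Z + Y), γ Y⟫_ℝ :=
          add_le_add (hsys.inner_le _ _) (hsys.inner_le _ _)
      _ = ⟪γ (Z + Y), γ Z + γ Y⟫_ℝ := (inner_add_right _ _ _).symm

theorem eq_of_add_eq_of_inner_eq {Z Y Z' Y' : 𝓗} (h : ⟪Z, Y⟫_ℝ = ⟪γ Z, γ Y⟫_ℝ)
    (hsum : Z + Y = Z' + Y') (hZ' : γ Z' = γ Z) (hY' : γ Y' = γ Y) : Z = Z' := by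
  refine eq_of_norm_eq_of_norm_sq_le_inner ?_ ?_
  · rw [← hsys.norm_gamma, ← hsys.norm_gamma Z', hZ']
  · have hY'_le : ⟪Z, Y'⟫_ℝ ≤ ⟪Z, Y⟫_ℝ := by
      simpa only [hY', ← h] using hsys.inner_le Z Y'
    have hZ'_eq : Z' = Z + Y - Y' := by rw [hsum]; abel
    rw [hZ'_eq, inner_sub_right, inner_add_right, real_inner_self_eq_norm_sq]
    linarith

theorem exists_decomp_of_inner_eq {Z Y : 𝓗} (h : ⟪Z, Y⟫_ℝ = ⟪γ Z, γ Y⟫_ℝ) :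
    ∃ a : A, Z = Λ a (γ Z) ∧ Y = Λ a (γ Y) := by
  obtain ⟨a, ha⟩ := hsys.exists_decomp (Z + Y)
  have hsum : Z + Y = Λ a (γ Z) + Λ a (γ Y) := by
    rw [← map_add, ← hsys.gamma_add_of_inner_eq h]
    exact ha
  have h' : ⟪Y, Z⟫_ℝ = ⟪γ Y, γ Z⟫_ℝ := by rw [real_inner_comm, h, real_inner_comm]
  exact ⟨a, hsys.eq_of_add_eq_of_inner_eq h hsum (hsys.gamma_lambda_gamma a Z)
      (hsys.gamma_lambda_gamma a Y),
    hsys.eq_of_add_eq_of_inner_eq h' (by rw [add_comm, hsum, add_comm])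
      (hsys.gamma_lambda_gamma a Y) (hsys.gamma_lambda_gamma a Z)⟩

theorem inner_eq_inner_gamma_iff {Z Y : 𝓗} :
    ⟪Z, Y⟫_ℝ = ⟪γ Z, γ Y⟫_ℝ ↔ ∃ a : A, Z = Λ a (γ Z) ∧ Y = Λ a (γ Y) :=
  ⟨hsys.exists_decomp_of_inner_eq, fun ⟨_, hZ, hY⟩ => hsys.inner_eq_inner_gamma_of_decomp hZ hY⟩

variable {φ : 𝓧 → EReal} {Z Y : 𝓗}

theorem inner_eq_of_mem_subdifferential_comp (hY : Y ∈ subdifferential (fun W => φ (γ W)) Z)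
    (hZ_top : φ (γ Z) ≠ ⊤) (hZ_bot : φ (γ Z) ≠ ⊥) : ⟪Z, Y⟫_ℝ = ⟪γ Z, γ Y⟫_ℝ := by
  obtain ⟨a, ha⟩ := hsys.exists_decomp Y
  refine le_antisymm (hsys.inner_le Z Y) ?_
  have := inner_sub_nonpos_of_mem_subdifferential (z := Λ a (γ Z)) hY hZ_top hZ_bot
    (by rw [hsys.gamma_lambda_gamma])
  rw [inner_sub_left, hsys.inner_lambda_of_decomp ha] at this
  linarith

theorem mem_subdifferential_of_mem_subdifferential_comp
    (hφ : ∀ (s : S) (x : 𝓧), φ (s • x) = φ x) (hY : Y ∈ subdifferential (fun W => φ (γ W)) Z)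
    {a : A} (haZ : Z = Λ a (γ Z)) (haY : Y = Λ a (γ Y)) : γ Y ∈ subdifferential φ (γ Z) := by
  intro x
  have := hY (Λ a x)
  beta_reduce at this
  rwa [hsys.apply_gamma_lambda hφ, inner_sub_left, hsys.inner_lambda_of_decomp haY,
    hsys.inner_eq_inner_gamma_of_decomp haZ haY, ← inner_sub_left] at this

theorem mem_subdifferential_comp_of_inner_eq (hγY : γ Y ∈ subdifferential φ (γ Z))
    (h : ⟪Z, Y⟫_ℝ = ⟪γ Z, γ Y⟫_ℝ) : Y ∈ subdifferential (fun W => φ (γ W)) Z := by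
  intro W
  have hle : ⟪W - Z, Y⟫_ℝ ≤ ⟪γ W - γ Z, γ Y⟫_ℝ := by
    rw [inner_sub_left, inner_sub_left, h]
    linarith [hsys.inner_le W Y]
  calc ((⟪W - Z, Y⟫_ℝ : ℝ) : EReal) + φ (γ Z)
      ≤ ((⟪γ W - γ Z, γ Y⟫_ℝ : ℝ) : EReal) + φ (γ Z) := by gcongr
    _ ≤ φ (γ W) := hγY (γ W)

end SpectralDecompositionSystem

/-- Subdifferential of a spectral function, membership characterization. -/
theorem spectral_function_mem_subdifferential_iff
    (γ : 𝓗 → 𝓧) (Λ : A → 𝓧 →ₗ[ℝ] 𝓗) (τ : 𝓧 → 𝓧)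
    (hsys : SpectralDecompositionSystem 𝓗 𝓧 S γ Λ τ)
    (φ : 𝓧 → EReal) (hproper : ∃ x, φ x ≠ ⊤) (hbot : ∀ x, φ x ≠ ⊥)
    (hφ : ∀ (s : S) (x : 𝓧), φ (s • x) = φ x) (Z Y : 𝓗) :
    Y ∈ subdifferential (fun W => φ (γ W)) Z ↔
      (γ Y ∈ subdifferential φ (γ Z) ∧
        ∃ a : A, Z = Λ a (γ Z) ∧ Y = Λ a (γ Y)) := by
  constructor
  · intro hY
    obtain ⟨x₀, hx₀⟩ := hproper
    have hx₀' : φ (γ (Λ (Classical.arbitrary A) x₀)) ≠ ⊤ := by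
      rwa [hsys.apply_gamma_lambda hφ]
    have hZ_top : φ (γ Z) ≠ ⊤ :=
      ne_top_of_mem_subdifferential (f := fun W => φ (γ W)) hY hx₀'
    obtain ⟨a, haZ, haY⟩ := hsys.inner_eq_inner_gamma_iff.mp
      (hsys.inner_eq_of_mem_subdifferential_comp hY hZ_top (hbot _))
    exact ⟨hsys.mem_subdifferential_of_mem_subdifferential_comp hφ hY haZ haY, a, haZ, haY⟩
  · rintro ⟨hγY, hdecomp⟩
    exact hsys.mem_subdifferential_comp_of_inner_eq hγY (hsys.inner_eq_inner_gamma_iff.mpr hdecomp)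
end

section
/- (Proximity operator and Moreau envelope of a spectral function.) Let 𝔥 be a Euclidean space with spectral decomposition system (𝒳, S, γ, (Λ_a)_{a∈A}), let φ : 𝒳 → (−∞, +∞] be proper (not identically +∞) and S-invariant (φ(s • x) = φ(x) for all s ∈ S, x ∈ 𝒳), and let X ∈ 𝔥. Set A_X = {a ∈ A : X = Λ_a(γ(X))}. Then: (i) inf_{Z ∈ 𝔥} ( φ(γ(Z)) + (1/2)‖Z − X‖² ) = inf_{z ∈ 𝒳} ( φ(z) + (1/2)‖z − γ(X)‖² ); and (ii) Argmin_{Z ∈ 𝔥} ( φ(γ(Z)) + (1/2)‖Z − X‖² ) = { Λ_a z : z ∈ Argmin_{w ∈ 𝒳} ( φ(w) + (1/2)‖w − γ(X)‖² ), a ∈ A_X }. -/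
/-!
The spectral map `γ` preserves norms and, by the trace inequality `⟪W, Z⟫ ≤ ⟪γ W, γ Z⟫`, does
not increase distances, so `φ (γ W) + ‖W - Z‖² / 2 ≥ φ (γ W) + ‖γ W - γ Z‖² / 2`. Conversely, if
`Z = Λ a (γ Z)`, then `W = Λ a w` has objective value exactly `φ w + ‖w - γ Z‖² / 2`, because
`φ ∘ γ ∘ Λ a = φ ∘ τ = φ`. Hence the two infima agree. At a minimizer `W` the first inequality is
an equality, which forces `⟪W, Z⟫ = ⟪γ W, γ Z⟫`; then `γ (W + Z) = γ W + γ Z`, and any `a`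
decomposing `W + Z` decomposes `W` and `Z` simultaneously.
-/

open scoped InnerProductSpace

namespace SpectralDecompositionSystem

variable {𝓗 𝓧 : Type*} [NormedAddCommGroup 𝓗] [InnerProductSpace ℝ 𝓗]
  [NormedAddCommGroup 𝓧] [InnerProductSpace ℝ 𝓧]
  {S : Type*} [Group S] [MulAction S 𝓧] {A : Type*}
  {γ : 𝓗 → 𝓧} {Λ : A → 𝓧 →ₗ[ℝ] 𝓗} {τ : 𝓧 → 𝓧}

theorem norm_gamma_s19 (hsys : SpectralDecompositionSystem 𝓗 𝓧 S γ Λ τ) (W : 𝓗) :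
    ‖γ W‖ = ‖W‖ := by
  obtain ⟨a, hW⟩ := hsys.exists_decomp W
  conv_rhs => rw [hW, hsys.norm_lambda]

theorem tau_gamma_s19 (hsys : SpectralDecompositionSystem 𝓗 𝓧 S γ Λ τ) (W : 𝓗) :
    τ (γ W) = γ W := by
  obtain ⟨a, hW⟩ := hsys.exists_decomp W
  conv_rhs => rw [hW, hsys.gamma_lambda]

theorem comp_tau (hsys : SpectralDecompositionSystem 𝓗 𝓧 S γ Λ τ) {β : Type*} {φ : 𝓧 → β}
    (hφ : ∀ (s : S) (x : 𝓧), φ (s • x) = φ x) (x : 𝓧) : φ (τ x) = φ x := by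
  obtain ⟨s, hs⟩ := hsys.tau_orbit x
  rw [hs, hφ]

theorem norm_lambda_sub (hsys : SpectralDecompositionSystem 𝓗 𝓧 S γ Λ τ) {a : A} {Z : 𝓗}
    (hZ : Z = Λ a (γ Z)) (w : 𝓧) : ‖Λ a w - Z‖ = ‖w - γ Z‖ := by
  rw [hZ, ← map_sub, hsys.norm_lambda, ← hZ]

theorem sq_norm_gamma_sub (hsys : SpectralDecompositionSystem 𝓗 𝓧 S γ Λ τ) (W Z : 𝓗) :
    ‖γ W - γ Z‖ ^ 2 = ‖W - Z‖ ^ 2 - 2 * (⟪γ W, γ Z⟫_ℝ - ⟪W, Z⟫_ℝ) := by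
  rw [norm_sub_sq_real, norm_sub_sq_real, hsys.norm_gamma_s19, hsys.norm_gamma_s19]
  ring

theorem sq_norm_gamma_sub_le (hsys : SpectralDecompositionSystem 𝓗 𝓧 S γ Λ τ) (W Z : 𝓗) :
    ‖γ W - γ Z‖ ^ 2 ≤ ‖W - Z‖ ^ 2 := by
  linarith [hsys.sq_norm_gamma_sub W Z, hsys.inner_le W Z]

theorem inner_gamma_eq_of_sq_norm_sub_eq (hsys : SpectralDecompositionSystem 𝓗 𝓧 S γ Λ τ)
    {W Z : 𝓗} (h : ‖γ W - γ Z‖ ^ 2 = ‖W - Z‖ ^ 2) : ⟪γ W, γ Z⟫_ℝ = ⟪W, Z⟫_ℝ := by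
  linarith [hsys.sq_norm_gamma_sub W Z]

theorem inner_lambda_gamma_le (hsys : SpectralDecompositionSystem 𝓗 𝓧 S γ Λ τ) (a : A)
    (W V : 𝓗) : ⟪Λ a (γ W), V⟫_ℝ ≤ ⟪γ W, γ V⟫_ℝ := by
  simpa only [hsys.gamma_lambda, hsys.tau_gamma_s19] using hsys.inner_le (Λ a (γ W)) V

theorem gamma_add_of_inner_eq_s19 (hsys : SpectralDecompositionSystem 𝓗 𝓧 S γ Λ τ) {W Z : 𝓗}
    (h : ⟪γ W, γ Z⟫_ℝ = ⟪W, Z⟫_ℝ) : γ (W + Z) = γ W + γ Z := by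
  have hnorm : ‖γ W + γ Z‖ = ‖W + Z‖ := by
    rw [← sq_eq_sq₀ (norm_nonneg _) (norm_nonneg _), norm_add_sq_real, norm_add_sq_real,
      hsys.norm_gamma_s19, hsys.norm_gamma_s19, h]
  have hnorm_gamma_add : ‖γ (W + Z)‖ = ‖γ W + γ Z‖ := by rw [hsys.norm_gamma_s19, hnorm]
  refine eq_of_norm_le_re_inner_eq_norm_sq (𝕜 := ℝ) hnorm_gamma_add.le ?_
  rw [RCLike.re_to_real]
  refine le_antisymm ((real_inner_le_norm _ _).trans_eq (by rw [hnorm_gamma_add, sq])) ?_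
  calc ‖γ W + γ Z‖ ^ 2 = ⟪W + Z, W⟫_ℝ + ⟪W + Z, Z⟫_ℝ := by
        rw [hnorm, ← inner_add_right, real_inner_self_eq_norm_sq]
    _ ≤ ⟪γ (W + Z), γ W⟫_ℝ + ⟪γ (W + Z), γ Z⟫_ℝ :=
        add_le_add (hsys.inner_le _ _) (hsys.inner_le _ _)
    _ = ⟪γ (W + Z), γ W + γ Z⟫_ℝ := (inner_add_right _ _ _).symm

theorem eq_lambda_gamma_of_add_eq (hsys : SpectralDecompositionSystem 𝓗 𝓧 S γ Λ τ) {a : A}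
    {W Z : 𝓗} (h : ⟪γ W, γ Z⟫_ℝ = ⟪W, Z⟫_ℝ) (hadd : W + Z = Λ a (γ W) + Λ a (γ Z)) :
    W = Λ a (γ W) := by
  have hW : ⟪Λ a (γ W), W⟫_ℝ ≤ ‖W‖ ^ 2 := by
    simpa only [real_inner_self_eq_norm_sq, hsys.norm_gamma_s19] using
      hsys.inner_lambda_gamma_le a W W
  have hZ : ⟪Λ a (γ Z), W⟫_ℝ ≤ ⟪W, Z⟫_ℝ := by
    simpa only [real_inner_comm (γ W), h, real_inner_comm W] using
      hsys.inner_lambda_gamma_le a Z W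
  have hsum : ⟪Λ a (γ W), W⟫_ℝ + ⟪Λ a (γ Z), W⟫_ℝ = ‖W‖ ^ 2 + ⟪W, Z⟫_ℝ := by
    rw [← inner_add_left, ← hadd, inner_add_left, real_inner_self_eq_norm_sq, real_inner_comm]
  refine (eq_of_norm_le_re_inner_eq_norm_sq (𝕜 := ℝ) ?_ ?_).symm
  · rw [hsys.norm_lambda, hsys.norm_gamma_s19]
  · rw [RCLike.re_to_real]
    linarith

theorem exists_common_decomp_of_inner_eq (hsys : SpectralDecompositionSystem 𝓗 𝓧 S γ Λ τ)
    {W Z : 𝓗} (h : ⟪γ W, γ Z⟫_ℝ = ⟪W, Z⟫_ℝ) : ∃ a : A, W = Λ a (γ W) ∧ Z = Λ a (γ Z) := by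
  obtain ⟨a, ha⟩ := hsys.exists_decomp (W + Z)
  rw [hsys.gamma_add_of_inner_eq_s19 h, map_add] at ha
  refine ⟨a, hsys.eq_lambda_gamma_of_add_eq h ha,
    hsys.eq_lambda_gamma_of_add_eq (W := Z) (Z := W) ?_ ?_⟩
  · rw [real_inner_comm, h, real_inner_comm]
  · rw [add_comm, ha, add_comm]

end SpectralDecompositionSystem

variable {𝓗 𝓧 : Type*} [NormedAddCommGroup 𝓗] [InnerProductSpace ℝ 𝓗]
  [FiniteDimensional ℝ 𝓗] [NormedAddCommGroup 𝓧] [InnerProductSpace ℝ 𝓧]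
  [FiniteDimensional ℝ 𝓧] {S : Type*} [Group S] [MulAction S 𝓧]
  {A : Type*} [Nonempty A]

/-- `Argmin g` is the set of minimizers of `g` if `inf g < +∞`, and `∅` otherwise. -/
def ArgminE {V : Type*} (g : V → EReal) : Set V :=
  {x | (⨅ y, g y) < ⊤ ∧ g x = ⨅ y, g y}

theorem iInf_eq_iInf_of_le_of_eq {α β L : Type*} [CompleteLattice L] {F : α → L} {f : β → L}
    (g : α → β) (h : β → α) (hle : ∀ x, f (g x) ≤ F x) (heq : ∀ y, F (h y) = f y) :
    ⨅ x, F x = ⨅ y, f y :=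
  le_antisymm (le_iInf fun y => heq y ▸ iInf_le _ _)
    (le_iInf fun x => (iInf_le _ (g x)).trans (hle x))

theorem mem_argminE_of_le {α β : Type*} {F : α → EReal} {f : β → EReal} {x : α} {y : β}
    (hx : x ∈ ArgminE F) (hle : f y ≤ F x) (hinf : ⨅ x, F x = ⨅ y, f y) :
    y ∈ ArgminE f ∧ f y = F x := by
  obtain ⟨hlt, hFx⟩ := hx
  have hfy : f y = ⨅ y, f y := le_antisymm (hle.trans_eq (hFx.trans hinf)) (iInf_le _ _)
  exact ⟨⟨hinf ▸ hlt, hfy⟩, hfy.trans (hFx.trans hinf).symm⟩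

theorem mem_argminE_of_eq {α β : Type*} {F : α → EReal} {f : β → EReal} {x : α} {y : β}
    (hy : y ∈ ArgminE f) (heq : F x = f y) (hinf : ⨅ x, F x = ⨅ y, f y) : x ∈ ArgminE F :=
  ⟨hinf ▸ hy.1, heq.trans (hy.2.trans hinf.symm)⟩

theorem EReal.coe_eq_coe_of_add_left_eq {c : EReal} (htop : c ≠ ⊤) (hbot : c ≠ ⊥) {r s : ℝ}
    (h : c + r = c + s) : r = s := by
  lift c to ℝ using ⟨htop, hbot⟩
  exact_mod_cast add_left_cancel (a := c) (by exact_mod_cast h)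

theorem spectral_function_prox_and_moreau_general
    (γ : 𝓗 → 𝓧) (Λ : A → 𝓧 →ₗ[ℝ] 𝓗) (τ : 𝓧 → 𝓧)
    (hsys : SpectralDecompositionSystem 𝓗 𝓧 S γ Λ τ)
    (φ : 𝓧 → EReal) (hbot : ∀ x, φ x ≠ ⊥)
    (hφ : ∀ (s : S) (x : 𝓧), φ (s • x) = φ x) (Z : 𝓗) :
    (⨅ W : 𝓗, (φ (γ W) + ((‖W - Z‖ ^ 2 / 2 : ℝ) : EReal)) =
      ⨅ w : 𝓧, (φ w + ((‖w - γ Z‖ ^ 2 / 2 : ℝ) : EReal))) ∧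
    (ArgminE (fun W => φ (γ W) + ((‖W - Z‖ ^ 2 / 2 : ℝ) : EReal)) =
      {W : 𝓗 | ∃ w ∈ ArgminE (fun v => φ v + ((‖v - γ Z‖ ^ 2 / 2 : ℝ) : EReal)),
        ∃ a : A, Z = Λ a (γ Z) ∧ W = Λ a w}) := by
  set F : 𝓗 → EReal := fun W => φ (γ W) + ((‖W - Z‖ ^ 2 / 2 : ℝ) : EReal)
  set f : 𝓧 → EReal := fun w => φ w + ((‖w - γ Z‖ ^ 2 / 2 : ℝ) : EReal)
  have hle (W : 𝓗) : f (γ W) ≤ F W :=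
    add_le_add le_rfl (EReal.coe_le_coe_iff.2 (by linarith [hsys.sq_norm_gamma_sub_le W Z]))
  have heq (a : A) (hZ : Z = Λ a (γ Z)) (w : 𝓧) : F (Λ a w) = f w := by
    simp only [F, f, hsys.gamma_lambda, hsys.comp_tau hφ, hsys.norm_lambda_sub hZ]
  obtain ⟨a₀, ha₀⟩ := hsys.exists_decomp Z
  have hinf := iInf_eq_iInf_of_le_of_eq γ (Λ a₀) hle (heq a₀ ha₀)
  refine ⟨hinf, Set.Subset.antisymm (fun W hW => ?_) ?_⟩
  · obtain ⟨hγW, hval⟩ := mem_argminE_of_le hW (hle W) hinf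
    have hφ_ne_top : φ (γ W) ≠ ⊤ := by
      have hFW : F W ≠ ⊤ := (hW.2.trans_lt hW.1).ne
      exact (EReal.add_ne_top_iff_ne_top_left (EReal.coe_ne_bot (‖W - Z‖ ^ 2 / 2))
        (EReal.coe_ne_top _)).mp hFW
    have hdist := EReal.coe_eq_coe_of_add_left_eq hφ_ne_top (hbot _) hval
    obtain ⟨a, hWa, hZa⟩ :=
      hsys.exists_common_decomp_of_inner_eq (hsys.inner_gamma_eq_of_sq_norm_sub_eq (by linarith))
    exact ⟨γ W, hγW, a, hZa, hWa⟩
  · rintro _ ⟨w, hw, a, hZa, rfl⟩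
    exact mem_argminE_of_eq hw (heq a hZa w) hinf

/-- Proximity operator and Moreau envelope of a spectral function. -/
theorem spectral_function_prox_and_moreau
    (γ : 𝓗 → 𝓧) (Λ : A → 𝓧 →ₗ[ℝ] 𝓗) (τ : 𝓧 → 𝓧)
    (hsys : SpectralDecompositionSystem 𝓗 𝓧 S γ Λ τ)
    (φ : 𝓧 → EReal) (hproper : ∃ x, φ x ≠ ⊤) (hbot : ∀ x, φ x ≠ ⊥)
    (hφ : ∀ (s : S) (x : 𝓧), φ (s • x) = φ x) (Z : 𝓗) :
    (⨅ W : 𝓗, (φ (γ W) + ((‖W - Z‖ ^ 2 / 2 : ℝ) : EReal)) =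
      ⨅ w : 𝓧, (φ w + ((‖w - γ Z‖ ^ 2 / 2 : ℝ) : EReal))) ∧
    (ArgminE (fun W => φ (γ W) + ((‖W - Z‖ ^ 2 / 2 : ℝ) : EReal)) =
      {W : 𝓗 | ∃ w ∈ ArgminE (fun v => φ v + ((‖v - γ Z‖ ^ 2 / 2 : ℝ) : EReal)),
        ∃ a : A, Z = Λ a (γ Z) ∧ W = Λ a w}) :=
  spectral_function_prox_and_moreau_general γ Λ τ hsys φ hbot hφ Z
end
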